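/- Annealed importance sampling computes expectations: under the hypotheses that S is a finite type, L ≥ 1, p_0, …, p_L : S → ℝ are strictly positive with Σ_{s∈S} p_0(s) = 1 and Σ_{s∈S} p_L(s) = 1, and T_1, …, T_{L−1} : S × S → ℝ are nonnegative, row-stochastic kernels satisfying detailed balance p_l(s) T_l(s,t) = p_l(t) T_l(t,s), for every function f : S → ℝ the weighted expectation over paths equals the expectation under p_L: Σ over all paths (x_1, …, x_L) ∈ S^L of p_0(x_1) · (Π_{l=1}^{L−1} T_l(x_l, x_{l+1})) · (Π_{l=1}^{L} p_l(x_l)/p_{l−1}(x_l)) · f(x_L) = Σ_{t∈S} p_L(t) f(t). -/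

import Mathlib

/-!
Multiplying the initial density by the first importance ratio turns `p 0 (x 1)` into
`p 1 (x 1)`. Detailed balance and row-stochasticity make `p 1` stationary for `T 1`, so summing
out `x 1` leaves `p 1 (x 2)`, which the next ratio turns into `p 2 (x 2)`. Induction on the
length of the path marginalises the whole weight to `p L (x L)`.
-/

open Finset

section

variable {S : Type*}

theorem sum_mul_eq_of_detailed_balance [Fintype S] {π : S → ℝ} {K : S → S → ℝ}
    (hdb : ∀ s t, π s * K s t = π t * K t s) (hK : ∀ s, ∑ t, K s t = 1) (t : S) :
    ∑ s, π s * K s t = π t := by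
  calc ∑ s, π s * K s t = ∑ s, π t * K t s := sum_congr rfl fun s _ => hdb s t
    _ = π t := by rw [← mul_sum, hK, mul_one]

/-- The paper's path `x_1, …, x_L` is `x 0, …, x m` with `L = m + 1`. -/
noncomputable def aisPathWeight (p : ℕ → S → ℝ) (T : ℕ → S → S → ℝ) (m : ℕ)
    (x : Fin (m + 1) → S) : ℝ :=
  p 0 (x 0) * (∏ l : Fin m, T (l.1 + 1) (x l.castSucc) (x l.succ)) *
    ∏ l : Fin (m + 1), p (l.1 + 1) (x l) / p l.1 (x l)

theorem aisPathWeight_zero (p : ℕ → S → ℝ) (T : ℕ → S → S → ℝ) (h0 : ∀ s, p 0 s ≠ 0)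
    (x : Fin 1 → S) : aisPathWeight p T 0 x = p 1 (x 0) := by
  simp [aisPathWeight, mul_div_cancel₀ _ (h0 (x 0))]

theorem aisPathWeight_cons (p : ℕ → S → ℝ) (T : ℕ → S → S → ℝ) (m : ℕ) (h0 : ∀ s, p 0 s ≠ 0)
    (s : S) (y : Fin (m + 1) → S) :
    aisPathWeight p T (m + 1) (Fin.cons s y) =
      p 1 s * T 1 s (y 0) *
        ((∏ l : Fin m, T (l.1 + 1 + 1) (y l.castSucc) (y l.succ)) *
          ∏ l : Fin (m + 1), p (l.1 + 1 + 1) (y l) / p (l.1 + 1) (y l)) := by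
  rw [aisPathWeight, Fin.prod_univ_succ, Fin.prod_univ_succ]
  simp only [Fin.cons_zero, Fin.cons_succ, Fin.castSucc_zero, ← Fin.succ_castSucc, Fin.val_zero,
    Fin.val_succ]
  field_simp [h0 s]

theorem sum_aisPathWeight_cons [Fintype S] (p : ℕ → S → ℝ) (T : ℕ → S → S → ℝ) (m : ℕ)
    (h0 : ∀ s, p 0 s ≠ 0) (hstat : ∀ t, ∑ s, p 1 s * T 1 s t = p 1 t) (y : Fin (m + 1) → S) :
    ∑ s, aisPathWeight p T (m + 1) (Fin.cons s y) =
      aisPathWeight (fun l => p (l + 1)) (fun l => T (l + 1)) m y := by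
  simp_rw [aisPathWeight_cons p T m h0, ← sum_mul, hstat, aisPathWeight, mul_assoc]

theorem sum_aisPathWeight_mul [Fintype S] (m : ℕ) (p : ℕ → S → ℝ) (T : ℕ → S → S → ℝ)
    (hp : ∀ l ≤ m, ∀ s, p l s ≠ 0)
    (hstat : ∀ l, 1 ≤ l → l ≤ m → ∀ t, ∑ s, p l s * T l s t = p l t) (f : S → ℝ) :
    ∑ x, aisPathWeight p T m x * f (x (Fin.last m)) = ∑ t, p (m + 1) t * f t := by
  induction m generalizing p T with
  | zero =>
    rw [← (Equiv.funUnique (Fin 1) S).symm.sum_comp]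
    simp [aisPathWeight_zero p T (hp 0 le_rfl)]
  | succ m ih =>
    have hsplit : ∑ x, aisPathWeight p T (m + 1) x * f (x (Fin.last (m + 1))) =
        ∑ y : Fin (m + 1) → S, ∑ s, aisPathWeight p T (m + 1) (Fin.cons s y) *
          f (y (Fin.last m)) := by
      rw [← (Fin.consEquiv fun _ => S).sum_comp, Fintype.sum_prod_type, sum_comm]
      rfl
    simp only [hsplit, ← sum_mul,
      sum_aisPathWeight_cons p T m (hp 0 (Nat.zero_le _)) (hstat 1 le_rfl (by omega))]
    exact ih _ _ (fun l hl => hp (l + 1) (by omega))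
      (fun l h1 h2 => hstat (l + 1) (by omega) (by omega))

end

/-- Annealed importance sampling computes expectations. Under the same
hypotheses as the correctness statement (finite `S`, `L ≥ 1`, strictly positive `p l` with
`p 0`, `p L` probability distributions, nonnegative row-stochastic kernels `T l` in detailed
balance with `p l`), for every `f : S → ℝ`, the weighted expectation of `f (x L)` over paths
`(x 1, …, x L) ∈ S^L` (encoded as `x : Fin L → S` with `x ⟨l-1, _⟩` playing the role of
`x l`) equals the expectation of `f` under `p L`. -/
theorem ais_expectation (S : Type*) [Fintype S] (L : ℕ) (hL : 1 ≤ L)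
    (p : ℕ → S → ℝ) (hp : ∀ l ≤ L, ∀ s : S, 0 < p l s)
    (T : ℕ → S → S → ℝ)
    (hTrow : ∀ l, 1 ≤ l → l ≤ L - 1 → ∀ s : S, ∑ t : S, T l s t = 1)
    (hdb : ∀ l, 1 ≤ l → l ≤ L - 1 → ∀ s t : S, p l s * T l s t = p l t * T l t s)
    (f : S → ℝ) :
    ∑ x : Fin L → S,
      p 0 (x ⟨0, by omega⟩) *
        (∏ l : Fin (L - 1), T (l.1 + 1) (x ⟨l.1, by have := l.isLt; omega⟩)
          (x ⟨l.1 + 1, by have := l.isLt; omega⟩)) *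
        (∏ l : Fin L, p (l.1 + 1) (x l) / p l.1 (x l)) *
        f (x ⟨L - 1, by omega⟩)
    = ∑ t : S, p L t * f t := by
  obtain ⟨m, rfl⟩ : ∃ m, L = m + 1 := ⟨L - 1, by omega⟩
  exact sum_aisPathWeight_mul m p T (fun l hl s => (hp l (by omega) s).ne')
    (fun l h1 h2 => sum_mul_eq_of_detailed_balance (hdb l h1 (by omega))
      (hTrow l h1 (by omega))) f
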